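/- arXiv:1005.4223 — 2 statements merged into one kernel-verified Lean document; each statement's English description precedes it below -/
import Mathlib

section
/- Kelvin's circulation theorem: if u is a smooth time-dependent vector field on ℝ³ satisfying ∂ₜu + (u·∇)u = −∇ψ for a smooth function ψ(x,t), and γ : S¹ × ℝ → ℝ³ is a smooth family of loops advected by u (∂ₜγ(s,t) = u(γ(s,t),t)), then d/dt ∮ u(γ(s,t),t) · ∂ₛγ(s,t) ds = 0. -/
open MeasureTheory

abbrev V3 := Fin 3 → ℝ

/-- Partial derivative in direction `i`. -/
noncomputable def pd (i : Fin 3) (g : V3 → ℝ) (x : V3) : ℝ :=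
  fderiv ℝ g x (Pi.single i 1)

/-- Canonical Poisson bracket on phase space `ℝ³ₓ × ℝ³ₚ`. -/
noncomputable def pb (f g : V3 → V3 → ℝ) (x p : V3) : ℝ :=
  ∑ i : Fin 3, (pd i (fun y => f y p) x * pd i (fun q => g x q) p
              - pd i (fun q => f x q) p * pd i (fun y => g y p) x)

/-- Cross product on `ℝ³`. -/
noncomputable def cross (a b : V3) : V3 :=
  ![a 1 * b 2 - a 2 * b 1, a 2 * b 0 - a 0 * b 2, a 0 * b 1 - a 1 * b 0]

/-- Curl of a vector field on `ℝ³`. -/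
noncomputable def curl (v : V3 → V3) (x : V3) : V3 :=
  ![pd 1 (fun y => v y 2) x - pd 2 (fun y => v y 1) x,
    pd 2 (fun y => v y 0) x - pd 0 (fun y => v y 2) x,
    pd 0 (fun y => v y 1) x - pd 1 (fun y => v y 0) x]

/-- Divergence of a vector field on `ℝ³`. -/
noncomputable def divg (v : V3 → V3) (x : V3) : ℝ :=
  ∑ i : Fin 3, pd i (fun y => v y i) x

/-- Chain rule along a curve into a product. -/
lemma hasDerivAt_comp_prod {E F G : Type*} [NormedAddCommGroup E] [NormedSpace ℝ E]
    [NormedAddCommGroup F] [NormedSpace ℝ F] [NormedAddCommGroup G] [NormedSpace ℝ G]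
    {f : E × F → G} (hf : Differentiable ℝ f) {c : ℝ → E} {d : ℝ → F} {c' : E} {d' : F} {t : ℝ}
    (hc : HasDerivAt c c' t) (hd : HasDerivAt d d' t) :
    HasDerivAt (fun τ => f (c τ, d τ)) (fderiv ℝ f (c t, d t) (c', d')) t :=
  (hf (c t, d t)).hasFDerivAt.comp_hasDerivAt t (hc.prodMk hd)

lemma sum_smul_single (v : V3) : ∑ j : Fin 3, v j • (Pi.single j 1 : V3) = v := by
  have : ∀ j : Fin 3, v j • (Pi.single j 1 : V3) = Pi.single j (v j) := by
    intro j; ext k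
    by_cases h : j = k <;> simp [Pi.single_apply, h]
  simp_rw [this]
  exact Finset.univ_sum_single v

/-- Decomposition of the joint fderiv into spatial and time parts. -/
lemma joint_apply (f : V3 → ℝ → ℝ) (hf : ContDiff ℝ (⊤ : ℕ∞) (fun z : V3 × ℝ => f z.1 z.2))
    (x : V3) (t : ℝ) (v : V3) (c : ℝ) :
    fderiv ℝ (fun z : V3 × ℝ => f z.1 z.2) (x, t) (v, c)
      = (∑ j : Fin 3, v j * pd j (fun y => f y t) x) + c * deriv (fun τ => f x τ) t := by
  set L := fderiv ℝ (fun z : V3 × ℝ => f z.1 z.2) (x, t) with hL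
  have hdiff : Differentiable ℝ (fun z : V3 × ℝ => f z.1 z.2) := hf.differentiable (by simp)
  have hpd : ∀ j : Fin 3, pd j (fun y => f y t) x = L (Pi.single j 1, 0) := by
    intro j
    have hincl : HasFDerivAt (fun y : V3 => ((y, t) : V3 × ℝ))
        ((ContinuousLinearMap.id ℝ V3).prod 0) x :=
      (hasFDerivAt_id x).prodMk (hasFDerivAt_const t x)
    have hcomp := (hdiff (x, t)).hasFDerivAt.comp x hincl
    have : fderiv ℝ (fun y : V3 => f y t) x
        = L.comp ((ContinuousLinearMap.id ℝ V3).prod 0) := hcomp.fderiv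
    rw [pd, this]
    simp
  have htd : deriv (fun τ => f x τ) t = L (0, 1) := by
    have := (hasDerivAt_comp_prod hdiff (hasDerivAt_const t x) (hasDerivAt_id t)).deriv
    simpa using this
  have h1 : (∑ j : Fin 3, v j • ((Pi.single j 1 : V3), (0:ℝ))) = ((v, 0) : V3 × ℝ) := by
    rw [Prod.ext_iff]
    refine ⟨?_, by simp [Prod.snd_sum]⟩
    rw [Prod.fst_sum]
    simpa using sum_smul_single v
  have hvc : ((v, c) : V3 × ℝ)
      = (∑ j : Fin 3, v j • ((Pi.single j 1 : V3), (0:ℝ))) + c • ((0:V3), (1:ℝ)) := by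
    rw [h1]; ext <;> simp
  rw [hvc, map_add, map_sum, _root_.map_smul, htd, smul_eq_mul]
  congr 1
  refine Finset.sum_congr rfl fun j _ => ?_
  rw [_root_.map_smul, smul_eq_mul, hpd j]

lemma pd_eq_joint (f : V3 → ℝ → ℝ) (hf : ContDiff ℝ (⊤ : ℕ∞) (fun z : V3 × ℝ => f z.1 z.2))
    (x : V3) (t : ℝ) (i : Fin 3) :
    fderiv ℝ (fun z : V3 × ℝ => f z.1 z.2) (x, t) (Pi.single i 1, 0)
      = pd i (fun y => f y t) x := by
  rw [joint_apply f hf x t _ 0]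
  simp [Pi.single_apply]

/-- s-derivative of a component of γ, as a function of (s,t). -/
noncomputable def D1g (γ : ℝ → ℝ → V3) (i : Fin 3) (z : ℝ × ℝ) : ℝ :=
  fderiv ℝ (fun w : ℝ × ℝ => γ w.1 w.2 i) z (1, 0)

/-- s-derivative of γ as a vector. -/
noncomputable def Dgv (γ : ℝ → ℝ → V3) (z : ℝ × ℝ) : V3 := fun i => D1g γ i z

/-- The integrand of the circulation. -/
noncomputable def Phi (u : V3 → ℝ → V3) (γ : ℝ → ℝ → V3) (s τ : ℝ) : ℝ :=
  ∑ i : Fin 3, u (γ s τ) τ i * D1g γ i (s, τ)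

/-- The time derivative of the integrand. -/
noncomputable def Aint (u : V3 → ℝ → V3) (ψ : V3 → ℝ → ℝ) (γ : ℝ → ℝ → V3) (s τ : ℝ) : ℝ :=
  ∑ i : Fin 3,
    (-(fderiv ℝ (fun z : V3 × ℝ => ψ z.1 z.2) (γ s τ, τ) (Pi.single i 1, 0)) * D1g γ i (s, τ)
      + u (γ s τ) τ i
        * fderiv ℝ (fun z : V3 × ℝ => u z.1 z.2 i) (γ s τ, τ) (Dgv γ (s, τ), 0))

/-- Kelvin's circulation theorem: circulation of `u` around a loop advected
by `u` is conserved when `∂ₜu + (u·∇)u = −∇ψ`. -/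
theorem kelvin_circulation (u : V3 → ℝ → V3) (ψ : V3 → ℝ → ℝ) (γ : ℝ → ℝ → V3)
    (hu : ContDiff ℝ (⊤ : ℕ∞) (fun z : V3 × ℝ => u z.1 z.2))
    (hψ : ContDiff ℝ (⊤ : ℕ∞) (fun z : V3 × ℝ => ψ z.1 z.2))
    (hγ : ContDiff ℝ (⊤ : ℕ∞) (fun z : ℝ × ℝ => γ z.1 z.2))
    (hper : ∀ s t, γ (s + 1) t = γ s t)
    (hadv : ∀ s t i, deriv (fun τ => γ s τ i) t = u (γ s t) t i)
    (hmom : ∀ x t i, deriv (fun τ => u x τ i) t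
        + (∑ j : Fin 3, u x t j * pd j (fun y => u y t i) x)
        = -pd i (fun y => ψ y t) x) :
    ∀ t : ℝ,
      deriv (fun τ => ∫ s in (0:ℝ)..1,
        ∑ i : Fin 3, u (γ s τ) τ i * deriv (fun s' => γ s' τ i) s) t = 0 := by
  intro t
  classical
  have huC : ∀ i : Fin 3, ContDiff ℝ (⊤ : ℕ∞) (fun z : V3 × ℝ => u z.1 z.2 i) :=
    fun i => contDiff_pi.mp hu i
  have hγC : ∀ i : Fin 3, ContDiff ℝ (⊤ : ℕ∞) (fun z : ℝ × ℝ => γ z.1 z.2 i) :=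
    fun i => contDiff_pi.mp hγ i
  have hud : ∀ i, Differentiable ℝ (fun z : V3 × ℝ => u z.1 z.2 i) :=
    fun i => (huC i).differentiable (by simp)
  have hψd : Differentiable ℝ (fun z : V3 × ℝ => ψ z.1 z.2) := hψ.differentiable (by simp)
  have hγd : ∀ i, Differentiable ℝ (fun z : ℝ × ℝ => γ z.1 z.2 i) :=
    fun i => (hγC i).differentiable (by simp)
  have hγd2 : ∀ i, Differentiable ℝ (fderiv ℝ (fun z : ℝ × ℝ => γ z.1 z.2 i)) :=
    fun i => ((hγC i).fderiv_right (m := (⊤ : ℕ∞)) (by simp)).differentiable (by simp)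
  -- (1) s-derivative of γ components
  have hD1 : ∀ (i : Fin 3) (s τ : ℝ), HasDerivAt (fun σ => γ σ τ i) (D1g γ i (s, τ)) s :=
    fun i s τ => hasDerivAt_comp_prod (hγd i) (hasDerivAt_id s) (hasDerivAt_const s τ)
  -- (2) t-derivative of γ components equals u
  have hD2val : ∀ (i : Fin 3) (s τ : ℝ),
      fderiv ℝ (fun w : ℝ × ℝ => γ w.1 w.2 i) (s, τ) (0, 1) = u (γ s τ) τ i := by
    intro i s τ
    have h := (hasDerivAt_comp_prod (hγd i) (hasDerivAt_const τ s) (hasDerivAt_id τ)).deriv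
    simp only [id_eq] at h
    rw [← h]
    exact hadv s τ i
  -- (3) vector-valued advection
  have hγv : ∀ s τ : ℝ, HasDerivAt (fun τ' => γ s τ') (u (γ s τ) τ) τ := by
    intro s τ
    refine hasDerivAt_pi.mpr fun i => ?_
    have h := hasDerivAt_comp_prod (hγd i) (hasDerivAt_const τ s) (hasDerivAt_id τ)
    simp only [id_eq] at h
    rwa [hD2val i s τ] at h
  -- (4) vector-valued s-derivative
  have hDγv : ∀ s τ : ℝ, HasDerivAt (fun σ => γ σ τ) (Dgv γ (s, τ)) s :=
    fun s τ => hasDerivAt_pi.mpr fun i => hD1 i s τ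
  -- (5) time derivative of u along the flow
  have hU : ∀ (i : Fin 3) (s τ : ℝ),
      HasDerivAt (fun τ' => u (γ s τ') τ' i)
        (fderiv ℝ (fun z : V3 × ℝ => u z.1 z.2 i) (γ s τ, τ) (u (γ s τ) τ, 1)) τ :=
    fun i s τ => hasDerivAt_comp_prod (hud i) (hγv s τ) (hasDerivAt_id τ)
  -- (6) material derivative via momentum equation
  have hmat : ∀ (i : Fin 3) (s τ : ℝ),
      fderiv ℝ (fun z : V3 × ℝ => u z.1 z.2 i) (γ s τ, τ) (u (γ s τ) τ, 1)
        = -(fderiv ℝ (fun z : V3 × ℝ => ψ z.1 z.2) (γ s τ, τ) (Pi.single i 1, 0)) := by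
    intro i s τ
    have h1 : fderiv ℝ (fun z : V3 × ℝ => u z.1 z.2 i) (γ s τ, τ) (u (γ s τ) τ, 1)
        = (∑ j : Fin 3, u (γ s τ) τ j * pd j (fun y => u y τ i) (γ s τ))
          + 1 * deriv (fun τ' => u (γ s τ) τ' i) τ :=
      joint_apply (fun x τ' => u x τ' i) (huC i) (γ s τ) τ (u (γ s τ) τ) 1
    have h2 : fderiv ℝ (fun z : V3 × ℝ => ψ z.1 z.2) (γ s τ, τ) (Pi.single i 1, 0)
        = pd i (fun y => ψ y τ) (γ s τ) := pd_eq_joint ψ hψ (γ s τ) τ i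
    have h3 := hmom (γ s τ) τ i
    rw [h1, h2, one_mul]
    linarith
  -- (7) equality of mixed partials
  have hmix : ∀ (i : Fin 3) (s τ : ℝ),
      HasDerivAt (fun τ' => D1g γ i (s, τ'))
        (fderiv ℝ (fun z : V3 × ℝ => u z.1 z.2 i) (γ s τ, τ) (Dgv γ (s, τ), 0)) τ := by
    intro i s τ
    have hK : HasDerivAt (fun τ' => fderiv ℝ (fun w : ℝ × ℝ => γ w.1 w.2 i) (s, τ'))
        (fderiv ℝ (fderiv ℝ (fun w : ℝ × ℝ => γ w.1 w.2 i)) (s, τ) (0, 1)) τ :=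
      hasDerivAt_comp_prod (hγd2 i) (hasDerivAt_const τ s) (hasDerivAt_id τ)
    have h1 : HasDerivAt (fun τ' => D1g γ i (s, τ'))
        (fderiv ℝ (fderiv ℝ (fun w : ℝ × ℝ => γ w.1 w.2 i)) (s, τ) (0, 1) (1, 0)) τ := by
      have h := hK.clm_apply (hasDerivAt_const τ (((1:ℝ), (0:ℝ)) : ℝ × ℝ))
      simp at h
      exact h
    have hsymm : fderiv ℝ (fderiv ℝ (fun w : ℝ × ℝ => γ w.1 w.2 i)) (s, τ) (0, 1) (1, 0)
        = fderiv ℝ (fderiv ℝ (fun w : ℝ × ℝ => γ w.1 w.2 i)) (s, τ) (1, 0) (0, 1) :=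
      second_derivative_symmetric (fun y => (hγd i y).hasFDerivAt)
        (hγd2 i (s, τ)).hasFDerivAt _ _
    have hK2 : HasDerivAt (fun σ => fderiv ℝ (fun w : ℝ × ℝ => γ w.1 w.2 i) (σ, τ) (0, 1))
        (fderiv ℝ (fderiv ℝ (fun w : ℝ × ℝ => γ w.1 w.2 i)) (s, τ) (1, 0) (0, 1)) s := by
      simpa using (hasDerivAt_comp_prod (hγd2 i) (hasDerivAt_id s)
        (hasDerivAt_const s τ)).clm_apply (hasDerivAt_const s (((0:ℝ), (1:ℝ)) : ℝ × ℝ))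
    have hfun : (fun σ => fderiv ℝ (fun w : ℝ × ℝ => γ w.1 w.2 i) (σ, τ) (0, 1))
        = fun σ => u (γ σ τ) τ i := funext fun σ => hD2val i σ τ
    rw [hfun] at hK2
    have hUs : HasDerivAt (fun σ => u (γ σ τ) τ i)
        (fderiv ℝ (fun z : V3 × ℝ => u z.1 z.2 i) (γ s τ, τ) (Dgv γ (s, τ), 0)) s :=
      hasDerivAt_comp_prod (hud i) (hDγv s τ) (hasDerivAt_const s τ)
    have heq := hK2.deriv.symm.trans hUs.deriv
    exact (hsymm.trans heq) ▸ h1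
  -- (8) time derivative of the integrand
  have hΦt : ∀ s τ : ℝ, HasDerivAt (fun τ' => Phi u γ s τ') (Aint u ψ γ s τ) τ := by
    intro s τ
    refine HasDerivAt.fun_sum fun i _ => ?_
    have := (hU i s τ).mul (hmix i s τ)
    rwa [hmat i s τ] at this
  -- (9) joint continuity
  have cγτ : Continuous (fun z : ℝ × ℝ => ((γ z.1 z.2, z.2) : V3 × ℝ)) :=
    hγ.continuous.prodMk continuous_snd
  have cu : Continuous (fun z : ℝ × ℝ => u (γ z.1 z.2) z.2) := hu.continuous.comp cγτ
  have cui : ∀ i : Fin 3, Continuous (fun z : ℝ × ℝ => u (γ z.1 z.2) z.2 i) :=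
    fun i => (continuous_apply i).comp cu
  have cψ' : Continuous (fun z : ℝ × ℝ =>
      fderiv ℝ (fun w : V3 × ℝ => ψ w.1 w.2) (γ z.1 z.2, z.2)) :=
    ((hψ.fderiv_right (m := (⊤ : ℕ∞)) (by simp)).continuous).comp cγτ
  have cD1 : ∀ i, Continuous (fun z : ℝ × ℝ => D1g γ i z) :=
    fun i => (((hγC i).fderiv_right (m := (⊤ : ℕ∞)) (by simp)).continuous).clm_apply continuous_const
  have cDgv : Continuous (fun z : ℝ × ℝ => Dgv γ z) := continuous_pi fun i => cD1 i
  have cfu : ∀ i, Continuous (fun z : ℝ × ℝ =>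
      fderiv ℝ (fun w : V3 × ℝ => u w.1 w.2 i) (γ z.1 z.2, z.2) (Dgv γ z, 0)) :=
    fun i => ((((huC i).fderiv_right (m := (⊤ : ℕ∞)) (by simp)).continuous).comp cγτ).clm_apply
      (cDgv.prodMk continuous_const)
  have cA : Continuous (fun z : ℝ × ℝ => Aint u ψ γ z.1 z.2) := by
    unfold Aint
    refine continuous_finset_sum _ fun i _ => ?_
    exact (((cψ'.clm_apply continuous_const).neg).mul (cD1 i)).add ((cui i).mul (cfu i))
  have cPhi : Continuous (fun z : ℝ × ℝ => Phi u γ z.1 z.2) := by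
    unfold Phi
    exact continuous_finset_sum _ fun i _ => (cui i).mul (cD1 i)
  -- (10) s-derivative of the Bernoulli function equals Aint
  have hGs : ∀ τ s : ℝ, HasDerivAt
      (fun σ => -ψ (γ σ τ) τ + ∑ i : Fin 3, u (γ σ τ) τ i * u (γ σ τ) τ i / 2)
      (Aint u ψ γ s τ) s := by
    intro τ s
    have hψσ : HasDerivAt (fun σ => ψ (γ σ τ) τ)
        (fderiv ℝ (fun z : V3 × ℝ => ψ z.1 z.2) (γ s τ, τ) (Dgv γ (s, τ), 0)) s :=
      hasDerivAt_comp_prod hψd (hDγv s τ) (hasDerivAt_const s τ)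
    have hUσ : ∀ i, HasDerivAt (fun σ => u (γ σ τ) τ i)
        (fderiv ℝ (fun z : V3 × ℝ => u z.1 z.2 i) (γ s τ, τ) (Dgv γ (s, τ), 0)) s :=
      fun i => hasDerivAt_comp_prod (hud i) (hDγv s τ) (hasDerivAt_const s τ)
    have hcomb := (hψσ.neg).add (HasDerivAt.fun_sum (u := Finset.univ)
      fun i _ => ((hUσ i).mul (hUσ i)).div_const 2)
    have hval : -(fderiv ℝ (fun z : V3 × ℝ => ψ z.1 z.2) (γ s τ, τ) (Dgv γ (s, τ), 0))
        + ∑ i : Fin 3,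
          (fderiv ℝ (fun z : V3 × ℝ => u z.1 z.2 i) (γ s τ, τ) (Dgv γ (s, τ), 0)
              * u (γ s τ) τ i
            + u (γ s τ) τ i
              * fderiv ℝ (fun z : V3 × ℝ => u z.1 z.2 i) (γ s τ, τ) (Dgv γ (s, τ), 0)) / 2
        = Aint u ψ γ s τ := by
      have e1 : fderiv ℝ (fun z : V3 × ℝ => ψ z.1 z.2) (γ s τ, τ) (Dgv γ (s, τ), 0)
          = ∑ j : Fin 3, Dgv γ (s, τ) j * pd j (fun y => ψ y τ) (γ s τ) := by
        rw [joint_apply ψ hψ]; simp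
      unfold Aint
      rw [e1]
      simp only [pd_eq_joint ψ hψ]
      have e3 : ∀ j : Fin 3, Dgv γ (s, τ) j = D1g γ j (s, τ) := fun j => rfl
      simp only [e3]
      rw [← Finset.sum_neg_distrib, ← Finset.sum_add_distrib]
      refine Finset.sum_congr rfl fun i _ => ?_
      ring
    exact hval ▸ hcomb
  -- (11) the integral of Aint in s vanishes
  have hFTC : ∀ τ : ℝ, (∫ s in (0:ℝ)..1, Aint u ψ γ s τ) = 0 := by
    intro τ
    have hint : IntervalIntegrable (fun s => Aint u ψ γ s τ) volume 0 1 :=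
      (cA.comp (continuous_id.prodMk continuous_const)).intervalIntegrable 0 1
    rw [intervalIntegral.integral_eq_sub_of_hasDerivAt (fun s _ => hGs τ s) hint]
    have h1 : γ (1:ℝ) τ = γ 0 τ := by simpa using hper 0 τ
    rw [h1]
    ring
  -- (12) differentiation under the integral sign
  obtain ⟨C, hC⟩ : ∃ C, ∀ z ∈ (Set.Icc (0:ℝ) 1 ×ˢ Set.Icc (t-1) (t+1)),
      ‖Aint u ψ γ z.1 z.2‖ ≤ C :=
    (isCompact_Icc.prod isCompact_Icc).exists_bound_of_continuousOn cA.continuousOn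
  have key := intervalIntegral.hasDerivAt_integral_of_dominated_loc_of_deriv_le
    (μ := volume) (F := fun τ s => Phi u γ s τ) (F' := fun τ s => Aint u ψ γ s τ)
    (x₀ := t) (a := 0) (b := 1) (s := Metric.ball t 1) (bound := fun _ => C) (Metric.ball_mem_nhds t one_pos)
    (Filter.Eventually.of_forall fun τ =>
      ((cPhi.comp (continuous_id.prodMk continuous_const)).aestronglyMeasurable))
    ((cPhi.comp (continuous_id.prodMk continuous_const)).intervalIntegrable 0 1)
    ((cA.comp (continuous_id.prodMk continuous_const)).aestronglyMeasurable)
    (ae_of_all _ fun s hs x hx => by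
      have hs' : s ∈ Set.Icc (0:ℝ) 1 := by
        rw [Set.uIoc_of_le zero_le_one] at hs
        exact ⟨hs.1.le, hs.2⟩
      have hx' : x ∈ Set.Icc (t-1) (t+1) := by
        rw [Real.ball_eq_Ioo] at hx
        exact ⟨hx.1.le, hx.2.le⟩
      exact hC (s, x) ⟨hs', hx'⟩)
    intervalIntegrable_const
    (ae_of_all _ fun s _ x _ => hΦt s x)
  -- (13) conclusion
  have hrew : (fun τ => ∫ s in (0:ℝ)..1,
      ∑ i : Fin 3, u (γ s τ) τ i * deriv (fun s' => γ s' τ i) s)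
      = fun τ => ∫ s in (0:ℝ)..1, Phi u γ s τ := by
    funext τ
    refine intervalIntegral.integral_congr fun s _ => ?_
    unfold Phi
    exact Finset.sum_congr rfl fun i _ => by rw [(hD1 i s τ).deriv]
  rw [hrew, key.2.deriv]
  exact hFTC t
end

section
/- Generalized circulation theorem: if a vector field m on ℝ³ satisfies ∂ₜm + (U·∇)m + (∇U)ᵀ·m = −∇ψ + F for smooth U, ψ, F, and γ(·,t) is a closed loop advected by U, then d/dt ∮_γ m·dx = ∮_γ F·dx. -/
open MeasureTheory

/-- value of a CLM on V3 as sum over basis -/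
lemma clm_sum (L : V3 →L[ℝ] ℝ) (v : V3) : L v = ∑ j, v j * L (Pi.single j 1) := by
  conv_lhs => rw [← Finset.univ_sum_single v, map_sum]
  refine Finset.sum_congr rfl fun j _ => ?_
  have h : Pi.single j (v j) = v j • (Pi.single j (1:ℝ) : V3) := by
    ext k; by_cases hk : k = j <;> simp [Pi.single_apply, hk]
  rw [h, _root_.map_smul, smul_eq_mul]

/-- slice derivative in first variable, ℝ×ℝ domain -/
lemma slice1 {f : ℝ × ℝ → ℝ} (hf : Differentiable ℝ f) (s τ : ℝ) :
    HasDerivAt (fun s' => f (s', τ)) (fderiv ℝ f (s, τ) (1, 0)) s := by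
  have h := (hf (s, τ)).hasFDerivAt.comp_hasDerivAt s
    ((hasDerivAt_id s).prodMk (hasDerivAt_const s τ))
  exact h

lemma slice2 {f : ℝ × ℝ → ℝ} (hf : Differentiable ℝ f) (s τ : ℝ) :
    HasDerivAt (fun τ' => f (s, τ')) (fderiv ℝ f (s, τ) (0, 1)) τ := by
  have h := (hf (s, τ)).hasFDerivAt.comp_hasDerivAt τ
    ((hasDerivAt_const τ s).prodMk (hasDerivAt_id τ))
  exact h

/-- slice derivative lemmas for V3 × ℝ domain -/
lemma sliceT {f : V3 × ℝ → ℝ} (hf : Differentiable ℝ f) (x : V3) (τ : ℝ) :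
    HasDerivAt (fun τ' => f (x, τ')) (fderiv ℝ f (x, τ) (0, 1)) τ := by
  have h := (hf (x, τ)).hasFDerivAt.comp_hasDerivAt τ
    ((hasDerivAt_const τ x).prodMk (hasDerivAt_id τ))
  exact h

lemma pd_slice {f : V3 × ℝ → ℝ} (hf : Differentiable ℝ f) (j : Fin 3) (x : V3) (τ : ℝ) :
    pd j (fun y => f (y, τ)) x = fderiv ℝ f (x, τ) (Pi.single j 1, 0) := by
  have h : HasFDerivAt (fun y => f (y, τ))
      ((fderiv ℝ f (x, τ)).comp (ContinuousLinearMap.inl ℝ V3 ℝ)) x :=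
    (hf (x, τ)).hasFDerivAt.comp x (hasFDerivAt_prodMk_left x τ)
  rw [pd, h.fderiv]; rfl

/-- decomposition of fderiv applied to (v,1) -/
lemma fderiv_pair_decomp {f : V3 × ℝ → ℝ} (hf : Differentiable ℝ f) (x : V3) (τ : ℝ) (v : V3) :
    fderiv ℝ f (x, τ) (v, 1)
      = fderiv ℝ f (x, τ) ((0:V3), 1) + ∑ j, v j * fderiv ℝ f (x, τ) (Pi.single j 1, 0) := by
  have hv : ((v, (1:ℝ)) : V3 × ℝ)
      = ((0:V3), (1:ℝ)) + ∑ j : Fin 3, v j • ((Pi.single j 1 : V3), (0:ℝ)) := by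
    have h2 : ∀ j : Fin 3, v j • ((Pi.single j 1 : V3), (0:ℝ))
        = ((Pi.single j (v j) : V3), (0:ℝ)) := by
      intro j
      refine Prod.ext ?_ (by simp)
      show v j • (Pi.single j (1:ℝ) : V3) = Pi.single j (v j)
      ext k; by_cases hk : k = j <;> simp [Pi.single_apply, hk]
    have h1 : (∑ j : Fin 3, v j • ((Pi.single j 1 : V3), (0:ℝ))) = (v, (0:ℝ)) := by
      simp_rw [h2]
      rw [← prod_mk_sum, Finset.univ_sum_single]
      simp
    rw [h1]; simp [Prod.ext_iff]
  rw [hv, map_add, map_sum]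
  congr 1
  refine Finset.sum_congr rfl fun j _ => ?_
  rw [_root_.map_smul, smul_eq_mul]

/-- symmetry of second partials for smooth f on ℝ² -/
lemma fderiv_swap {f : ℝ × ℝ → ℝ} (hf : ContDiff ℝ (⊤ : ℕ∞) f) (z v w : ℝ × ℝ) :
    fderiv ℝ (fun y => fderiv ℝ f y v) z w = fderiv ℝ (fun y => fderiv ℝ f y w) z v := by
  have hd : ∀ y, HasFDerivAt f (fderiv ℝ f y) y :=
    fun y => (hf.differentiable (by simp) y).hasFDerivAt
  have hf' : ContDiff ℝ (⊤ : ℕ∞) (fderiv ℝ f) := hf.fderiv_right (by simp)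
  have h2 : HasFDerivAt (fderiv ℝ f) (fderiv ℝ (fderiv ℝ f) z) z :=
    (hf'.differentiable (by simp) z).hasFDerivAt
  have hsym := second_derivative_symmetric hd h2
  have hv : HasFDerivAt (fun y => fderiv ℝ f y v)
      ((fderiv ℝ (fderiv ℝ f) z).flip v) z := by
    have := h2.clm_apply (hasFDerivAt_const v z)
    simpa using this
  have hw : HasFDerivAt (fun y => fderiv ℝ f y w)
      ((fderiv ℝ (fderiv ℝ f) z).flip w) z := by
    have := h2.clm_apply (hasFDerivAt_const w z)
    simpa using this
  rw [hv.fderiv, hw.fderiv]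
  simpa [ContinuousLinearMap.flip_apply] using hsym w v

/-- spatial derivative of the loop -/
noncomputable def Cc (γ : ℝ → ℝ → V3) (i : Fin 3) (s τ : ℝ) : ℝ :=
  fderiv ℝ (fun z : ℝ × ℝ => γ z.1 z.2 i) (s, τ) (1, 0)

/-- mixed second derivative of the loop -/
noncomputable def Bc (γ : ℝ → ℝ → V3) (i : Fin 3) (s τ : ℝ) : ℝ :=
  fderiv ℝ (fun z : ℝ × ℝ =>
    fderiv ℝ (fun w : ℝ × ℝ => γ w.1 w.2 i) z (1, 0)) (s, τ) (0, 1)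

/-- material derivative of m along the flow -/
noncomputable def Ac (m U : V3 → ℝ → V3) (γ : ℝ → ℝ → V3) (i : Fin 3) (s τ : ℝ) : ℝ :=
  fderiv ℝ (fun z : V3 × ℝ => m z.1 z.2 i) (γ s τ, τ) (U (γ s τ) τ, 1)

/-- time derivative of the circulation integrand -/
noncomputable def Dc (m U : V3 → ℝ → V3) (γ : ℝ → ℝ → V3) (τ s : ℝ) : ℝ :=
  ∑ i, (Ac m U γ i s τ * Cc γ i s τ + m (γ s τ) τ i * Bc γ i s τ)

section circ
variable {m U F : V3 → ℝ → V3} {ψ : V3 → ℝ → ℝ} {γ : ℝ → ℝ → V3}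

lemma hγi (hγ : ContDiff ℝ (⊤ : ℕ∞) (fun z : ℝ × ℝ => γ z.1 z.2)) (i : Fin 3) :
    ContDiff ℝ (⊤ : ℕ∞) (fun z : ℝ × ℝ => γ z.1 z.2 i) :=
  (ContinuousLinearMap.proj i : V3 →L[ℝ] ℝ).contDiff.comp hγ

lemma hmi (hm : ContDiff ℝ (⊤ : ℕ∞) (fun z : V3 × ℝ => m z.1 z.2)) (i : Fin 3) :
    ContDiff ℝ (⊤ : ℕ∞) (fun z : V3 × ℝ => m z.1 z.2 i) :=
  (ContinuousLinearMap.proj i : V3 →L[ℝ] ℝ).contDiff.comp hm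

lemma hasDerivAt_C (hγ : ContDiff ℝ (⊤ : ℕ∞) (fun z : ℝ × ℝ => γ z.1 z.2)) (i : Fin 3) (s τ : ℝ) :
    HasDerivAt (fun s' => γ s' τ i) (Cc γ i s τ) s :=
  slice1 ((hγi hγ i).differentiable (by simp)) s τ

lemma deriv_C (hγ : ContDiff ℝ (⊤ : ℕ∞) (fun z : ℝ × ℝ => γ z.1 z.2)) (i : Fin 3) (s τ : ℝ) :
    deriv (fun s' => γ s' τ i) s = Cc γ i s τ :=
  (hasDerivAt_C hγ i s τ).deriv

lemma hasDerivAt_T (hγ : ContDiff ℝ (⊤ : ℕ∞) (fun z : ℝ × ℝ => γ z.1 z.2)) (i : Fin 3) (s τ : ℝ) :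
    HasDerivAt (fun τ' => γ s τ' i)
      (fderiv ℝ (fun z : ℝ × ℝ => γ z.1 z.2 i) (s, τ) (0, 1)) τ :=
  slice2 ((hγi hγ i).differentiable (by simp)) s τ

lemma T_eq (hγ : ContDiff ℝ (⊤ : ℕ∞) (fun z : ℝ × ℝ => γ z.1 z.2))
    (hadv : ∀ s t i, deriv (fun τ => γ s τ i) t = U (γ s t) t i) (i : Fin 3) (s τ : ℝ) :
    fderiv ℝ (fun z : ℝ × ℝ => γ z.1 z.2 i) (s, τ) (0, 1) = U (γ s τ) τ i := by
  rw [← (hasDerivAt_T hγ i s τ).deriv]; exact hadv s τ i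

lemma hasDerivAt_γt (hγ : ContDiff ℝ (⊤ : ℕ∞) (fun z : ℝ × ℝ => γ z.1 z.2))
    (hadv : ∀ s t i, deriv (fun τ => γ s τ i) t = U (γ s t) t i) (s τ : ℝ) :
    HasDerivAt (fun τ' => γ s τ') (U (γ s τ) τ) τ :=
  hasDerivAt_pi.2 fun i => (T_eq hγ hadv i s τ) ▸ hasDerivAt_T hγ i s τ

lemma hasDerivAt_γs (hγ : ContDiff ℝ (⊤ : ℕ∞) (fun z : ℝ × ℝ => γ z.1 z.2)) (s τ : ℝ) :
    HasDerivAt (fun s' => γ s' τ) (fun i => Cc γ i s τ) s :=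
  hasDerivAt_pi.2 fun i => hasDerivAt_C hγ i s τ

lemma hasDerivAt_A (hm : ContDiff ℝ (⊤ : ℕ∞) (fun z : V3 × ℝ => m z.1 z.2))
    (hγ : ContDiff ℝ (⊤ : ℕ∞) (fun z : ℝ × ℝ => γ z.1 z.2))
    (hadv : ∀ s t i, deriv (fun τ => γ s τ i) t = U (γ s t) t i) (i : Fin 3) (s τ : ℝ) :
    HasDerivAt (fun τ' => m (γ s τ') τ' i) (Ac m U γ i s τ) τ := by
  have hc : HasDerivAt (fun τ' => ((γ s τ', τ') : V3 × ℝ)) (U (γ s τ) τ, 1) τ :=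
    (hasDerivAt_γt hγ hadv s τ).prodMk (hasDerivAt_id τ)
  have h := HasFDerivAt.comp_hasDerivAt (f := fun τ' => ((γ s τ', τ') : V3 × ℝ)) τ
    ((hmi hm i).differentiable (by simp) (γ s τ, τ)).hasFDerivAt hc
  exact h

lemma A_eq (hm : ContDiff ℝ (⊤ : ℕ∞) (fun z : V3 × ℝ => m z.1 z.2)) (i : Fin 3) (s τ : ℝ) :
    Ac m U γ i s τ = deriv (fun τ' => m (γ s τ) τ' i) τ
      + ∑ j, U (γ s τ) τ j * pd j (fun y => m y τ i) (γ s τ) := by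
  rw [Ac, fderiv_pair_decomp ((hmi hm i).differentiable (by simp))]
  congr 1
  · exact (sliceT ((hmi hm i).differentiable (by simp)) (γ s τ) τ).deriv.symm
  · exact Finset.sum_congr rfl fun j _ => by
      rw [pd_slice ((hmi hm i).differentiable (by simp)) j (γ s τ) τ]

lemma hasDerivAt_CB (hγ : ContDiff ℝ (⊤ : ℕ∞) (fun z : ℝ × ℝ => γ z.1 z.2)) (i : Fin 3) (s τ : ℝ) :
    HasDerivAt (fun τ' => Cc γ i s τ') (Bc γ i s τ) τ :=
  slice2 ((((hγi hγ i).fderiv_right (m := (⊤ : ℕ∞)) (by simp)).clm_apply contDiff_const).differentiable (by simp)) s τ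

lemma B_eq (hγ : ContDiff ℝ (⊤ : ℕ∞) (fun z : ℝ × ℝ => γ z.1 z.2))
    (hU : ContDiff ℝ (⊤ : ℕ∞) (fun z : V3 × ℝ => U z.1 z.2))
    (hadv : ∀ s t i, deriv (fun τ => γ s τ i) t = U (γ s t) t i) (i : Fin 3) (s τ : ℝ) :
    Bc γ i s τ = ∑ j, Cc γ j s τ * pd j (fun y => U y τ i) (γ s τ) := by
  have h1 : Bc γ i s τ
      = fderiv ℝ (fun z : ℝ × ℝ => fderiv ℝ (fun w : ℝ × ℝ => γ w.1 w.2 i) z (0, 1)) (s, τ) (1, 0) :=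
    fderiv_swap (hγi hγ i) (s, τ) (1, 0) (0, 1)
  have h2 : HasDerivAt (fun s' => fderiv ℝ (fun w : ℝ × ℝ => γ w.1 w.2 i) (s', τ) (0, 1))
      (fderiv ℝ (fun z : ℝ × ℝ => fderiv ℝ (fun w : ℝ × ℝ => γ w.1 w.2 i) z (0, 1)) (s, τ) (1, 0)) s :=
    slice1 ((((hγi hγ i).fderiv_right (m := (⊤ : ℕ∞)) (by simp)).clm_apply contDiff_const).differentiable (by simp)) s τ
  have h3 : (fun s' => fderiv ℝ (fun w : ℝ × ℝ => γ w.1 w.2 i) (s', τ) (0, 1))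
      = fun s' => U (γ s' τ) τ i := funext fun s' => T_eq hγ hadv i s' τ
  rw [h3] at h2
  have hUd : Differentiable ℝ (fun y => U y τ i) :=
    ((hmi hU i).comp (contDiff_id.prodMk contDiff_const)).differentiable (by simp)
  have h5 : HasDerivAt (fun s' => U (γ s' τ) τ i)
      (fderiv ℝ (fun y => U y τ i) (γ s τ) (fun j => Cc γ j s τ)) s :=
    (hUd (γ s τ)).hasFDerivAt.comp_hasDerivAt (f := fun s' => γ s' τ) s (hasDerivAt_γs hγ s τ)
  rw [h1, h2.unique h5, clm_sum (fderiv ℝ (fun y => U y τ i) (γ s τ)) (fun j => Cc γ j s τ)]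
  rfl

/-- gradient part ∇ψ pulled back to the loop -/
noncomputable def Pc (ψ : V3 → ℝ → ℝ) (γ : ℝ → ℝ → V3) (t s : ℝ) : ℝ :=
  fderiv ℝ (fun y => ψ y t) (γ s t) (fun j => Cc γ j s t)

lemma hasDerivAt_P (hψ : ContDiff ℝ (⊤ : ℕ∞) (fun z : V3 × ℝ => ψ z.1 z.2))
    (hγ : ContDiff ℝ (⊤ : ℕ∞) (fun z : ℝ × ℝ => γ z.1 z.2)) (t s : ℝ) :
    HasDerivAt (fun s' => ψ (γ s' t) t) (Pc ψ γ t s) s := by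
  have hψd : Differentiable ℝ (fun y => ψ y t) :=
    (hψ.comp (contDiff_id.prodMk contDiff_const)).differentiable (by simp)
  have h := HasFDerivAt.comp_hasDerivAt (f := fun s' => γ s' t) s
    (hψd (γ s t)).hasFDerivAt (hasDerivAt_γs hγ s t)
  exact h

lemma P_eq (t s : ℝ) :
    Pc ψ γ t s = ∑ j, Cc γ j s t * pd j (fun y => ψ y t) (γ s t) := by
  rw [Pc, clm_sum (fderiv ℝ (fun y => ψ y t) (γ s t)) (fun j => Cc γ j s t)]
  rfl

lemma D_eq (hm : ContDiff ℝ (⊤ : ℕ∞) (fun z : V3 × ℝ => m z.1 z.2))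
    (hU : ContDiff ℝ (⊤ : ℕ∞) (fun z : V3 × ℝ => U z.1 z.2))
    (hγ : ContDiff ℝ (⊤ : ℕ∞) (fun z : ℝ × ℝ => γ z.1 z.2))
    (hadv : ∀ s t i, deriv (fun τ => γ s τ i) t = U (γ s t) t i)
    (hmom : ∀ x t i, deriv (fun τ => m x τ i) t
        + (∑ j : Fin 3, U x t j * pd j (fun y => m y t i) x)
        + (∑ j : Fin 3, pd i (fun y => U y t j) x * m x t j)
        = -pd i (fun y => ψ y t) x + F x t i) (τ s : ℝ) :
    Dc m U γ τ s = (∑ i, F (γ s τ) τ i * Cc γ i s τ) - Pc ψ γ τ s := by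
  have hA : ∀ i, Ac m U γ i s τ
      = -(∑ j, pd i (fun y => U y τ j) (γ s τ) * m (γ s τ) τ j)
        - pd i (fun y => ψ y τ) (γ s τ) + F (γ s τ) τ i := by
    intro i
    have h := hmom (γ s τ) τ i
    rw [A_eq hm i s τ]
    linarith
  have hsum : ∀ i : Fin 3,
      Ac m U γ i s τ * Cc γ i s τ + m (γ s τ) τ i * Bc γ i s τ
      = (F (γ s τ) τ i * Cc γ i s τ
          - Cc γ i s τ * pd i (fun y => ψ y τ) (γ s τ))
        + ((∑ j, m (γ s τ) τ i * (Cc γ j s τ * pd j (fun y => U y τ i) (γ s τ)))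
          - (∑ j, pd i (fun y => U y τ j) (γ s τ) * m (γ s τ) τ j) * Cc γ i s τ) := by
    intro i
    rw [hA i, B_eq hγ hU hadv i s τ, Finset.mul_sum]
    ring
  have hcanc : ∑ i : Fin 3, ∑ j : Fin 3,
        m (γ s τ) τ i * (Cc γ j s τ * pd j (fun y => U y τ i) (γ s τ))
      = ∑ i : Fin 3, (∑ j, pd i (fun y => U y τ j) (γ s τ) * m (γ s τ) τ j) * Cc γ i s τ := by
    rw [Finset.sum_comm]
    refine Finset.sum_congr rfl fun i _ => ?_
    rw [Finset.sum_mul]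
    refine Finset.sum_congr rfl fun j _ => ?_
    ring
  rw [Dc]
  simp_rw [hsum]
  rw [Finset.sum_add_distrib, Finset.sum_sub_distrib, Finset.sum_sub_distrib, hcanc,
    sub_self, add_zero, P_eq]

lemma cont_γp (hγ : ContDiff ℝ (⊤ : ℕ∞) (fun z : ℝ × ℝ => γ z.1 z.2)) :
    Continuous fun p : ℝ × ℝ => γ p.2 p.1 :=
  hγ.continuous.comp (continuous_snd.prodMk continuous_fst)

lemma cont_C (hγ : ContDiff ℝ (⊤ : ℕ∞) (fun z : ℝ × ℝ => γ z.1 z.2)) (i : Fin 3) :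
    Continuous fun p : ℝ × ℝ => Cc γ i p.2 p.1 :=
  Continuous.clm_apply (((hγi hγ i).continuous_fderiv (by simp)).comp
    (continuous_snd.prodMk continuous_fst)) continuous_const

lemma cont_B (hγ : ContDiff ℝ (⊤ : ℕ∞) (fun z : ℝ × ℝ => γ z.1 z.2)) (i : Fin 3) :
    Continuous fun p : ℝ × ℝ => Bc γ i p.2 p.1 :=
  Continuous.clm_apply ((((((hγi hγ i).fderiv_right (m := (⊤ : ℕ∞)) (by simp)).clm_apply
    contDiff_const)).continuous_fderiv (by simp)).comp
    (continuous_snd.prodMk continuous_fst)) continuous_const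

lemma cont_A (hm : ContDiff ℝ (⊤ : ℕ∞) (fun z : V3 × ℝ => m z.1 z.2))
    (hU : ContDiff ℝ (⊤ : ℕ∞) (fun z : V3 × ℝ => U z.1 z.2))
    (hγ : ContDiff ℝ (⊤ : ℕ∞) (fun z : ℝ × ℝ => γ z.1 z.2)) (i : Fin 3) :
    Continuous fun p : ℝ × ℝ => Ac m U γ i p.2 p.1 := by
  have cz : Continuous fun p : ℝ × ℝ => ((γ p.2 p.1, p.1) : V3 × ℝ) :=
    (cont_γp hγ).prodMk continuous_fst
  have cU : Continuous fun p : ℝ × ℝ => U (γ p.2 p.1) p.1 := hU.continuous.comp cz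
  exact Continuous.clm_apply (((hmi hm i).continuous_fderiv (by simp)).comp cz)
    (cU.prodMk continuous_const)

lemma cont_D (hm : ContDiff ℝ (⊤ : ℕ∞) (fun z : V3 × ℝ => m z.1 z.2))
    (hU : ContDiff ℝ (⊤ : ℕ∞) (fun z : V3 × ℝ => U z.1 z.2))
    (hγ : ContDiff ℝ (⊤ : ℕ∞) (fun z : ℝ × ℝ => γ z.1 z.2)) :
    Continuous fun p : ℝ × ℝ => Dc m U γ p.1 p.2 := by
  refine continuous_finset_sum _ fun i _ => Continuous.add
    (Continuous.mul (cont_A hm hU hγ i) (cont_C hγ i)) (Continuous.mul ?_ (cont_B hγ i))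
  exact (continuous_apply i).comp (hm.continuous.comp ((cont_γp hγ).prodMk continuous_fst))

lemma cont_Q (hm : ContDiff ℝ (⊤ : ℕ∞) (fun z : V3 × ℝ => m z.1 z.2))
    (hγ : ContDiff ℝ (⊤ : ℕ∞) (fun z : ℝ × ℝ => γ z.1 z.2)) :
    Continuous fun p : ℝ × ℝ => ∑ i, m (γ p.2 p.1) p.1 i * Cc γ i p.2 p.1 :=
  continuous_finset_sum _ fun i _ =>
    ((continuous_apply i).comp
      (hm.continuous.comp ((cont_γp hγ).prodMk continuous_fst))).mul (cont_C hγ i)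

lemma cont_Fterm (hF : ContDiff ℝ (⊤ : ℕ∞) (fun z : V3 × ℝ => F z.1 z.2))
    (hγ : ContDiff ℝ (⊤ : ℕ∞) (fun z : ℝ × ℝ => γ z.1 z.2)) (t : ℝ) :
    Continuous fun s => ∑ i, F (γ s t) t i * Cc γ i s t := by
  have h := (cont_Q (m := F) hF hγ).comp
    ((continuous_const (y := t)).prodMk continuous_id)
  exact h

lemma cont_P (hψ : ContDiff ℝ (⊤ : ℕ∞) (fun z : V3 × ℝ => ψ z.1 z.2))
    (hγ : ContDiff ℝ (⊤ : ℕ∞) (fun z : ℝ × ℝ => γ z.1 z.2)) (t : ℝ) :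
    Continuous fun s => Pc ψ γ t s := by
  have cγs : Continuous fun s : ℝ => γ s t :=
    hγ.continuous.comp (continuous_id.prodMk continuous_const)
  have hc : Continuous fun s => fderiv ℝ (fun y => ψ y t) (γ s t) :=
    (((hψ.comp (contDiff_id.prodMk contDiff_const))).continuous_fderiv (by simp)).comp cγs
  exact hc.clm_apply (continuous_pi fun j =>
    (cont_C hγ j).comp ((continuous_const (y := t)).prodMk continuous_id))

end circ

/-- Generalized circulation theorem: if `∂ₜm + (U·∇)m + (∇U)ᵀ·m = −∇ψ + F` and
the loop `γ` is advected by `U`, then `d/dt ∮ m·dx = ∮ F·dx`. -/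
theorem generalized_circulation (m U F : V3 → ℝ → V3) (ψ : V3 → ℝ → ℝ)
    (γ : ℝ → ℝ → V3)
    (hm : ContDiff ℝ (⊤ : ℕ∞) (fun z : V3 × ℝ => m z.1 z.2))
    (hU : ContDiff ℝ (⊤ : ℕ∞) (fun z : V3 × ℝ => U z.1 z.2))
    (hF : ContDiff ℝ (⊤ : ℕ∞) (fun z : V3 × ℝ => F z.1 z.2))
    (hψ : ContDiff ℝ (⊤ : ℕ∞) (fun z : V3 × ℝ => ψ z.1 z.2))
    (hγ : ContDiff ℝ (⊤ : ℕ∞) (fun z : ℝ × ℝ => γ z.1 z.2))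
    (hper : ∀ s t, γ (s + 1) t = γ s t)
    (hadv : ∀ s t i, deriv (fun τ => γ s τ i) t = U (γ s t) t i)
    (hmom : ∀ x t i, deriv (fun τ => m x τ i) t
        + (∑ j : Fin 3, U x t j * pd j (fun y => m y t i) x)
        + (∑ j : Fin 3, pd i (fun y => U y t j) x * m x t j)
        = -pd i (fun y => ψ y t) x + F x t i) :
    ∀ t : ℝ,
      deriv (fun τ => ∫ s in (0:ℝ)..1,
          ∑ i : Fin 3, m (γ s τ) τ i * deriv (fun s' => γ s' τ i) s) t
        = ∫ s in (0:ℝ)..1,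
            ∑ i : Fin 3, F (γ s t) t i * deriv (fun s' => γ s' t i) s := by
  intro t
  have hQrw : ∀ τ, (fun s => ∑ i : Fin 3, m (γ s τ) τ i * deriv (fun s' => γ s' τ i) s)
      = fun s => ∑ i : Fin 3, m (γ s τ) τ i * Cc γ i s τ :=
    fun τ => funext fun s => by simp only [deriv_C hγ]
  have hK : IsCompact (Metric.closedBall t 1 ×ˢ Set.uIcc (0:ℝ) 1) :=
    (isCompact_closedBall t 1).prod isCompact_uIcc
  obtain ⟨Cb, hCb⟩ := hK.exists_bound_of_continuousOn (cont_D hm hU hγ).continuousOn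
  have key := intervalIntegral.hasDerivAt_integral_of_dominated_loc_of_deriv_le
    (F := fun τ s => ∑ i : Fin 3, m (γ s τ) τ i * deriv (fun s' => γ s' τ i) s)
    (F' := fun τ s => Dc m U γ τ s) (x₀ := t) (a := 0) (b := 1)
    (bound := fun _ => Cb) (μ := volume) (s := Metric.ball t 1) (Metric.ball_mem_nhds t one_pos)
    (Filter.Eventually.of_forall fun τ => by
      have h : AEStronglyMeasurable (fun s => ∑ i : Fin 3, m (γ s τ) τ i * Cc γ i s τ)
          (volume.restrict (Set.uIoc (0:ℝ) 1)) :=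
        ((cont_Q hm hγ).comp
          ((continuous_const (y := τ)).prodMk continuous_id)).aestronglyMeasurable
      rw [← hQrw τ] at h
      exact h)
    (by
      have h : IntervalIntegrable (fun s => ∑ i : Fin 3, m (γ s t) t i * Cc γ i s t)
          volume 0 1 :=
        ((cont_Q hm hγ).comp
          ((continuous_const (y := t)).prodMk continuous_id)).intervalIntegrable 0 1
      rw [← hQrw t] at h
      exact h)
    (((cont_D hm hU hγ).comp
      ((continuous_const (y := t)).prodMk continuous_id)).aestronglyMeasurable)
    (Filter.Eventually.of_forall fun s hs τ' hτ' => by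
      have := hCb (τ', s) ⟨Metric.ball_subset_closedBall hτ', Set.uIoc_subset_uIcc hs⟩
      simpa using this)
    (intervalIntegrable_const)
    (Filter.Eventually.of_forall fun s _ τ' _ => by
      have h1 : (fun τ'' => ∑ i : Fin 3, m (γ s τ'') τ'' i * deriv (fun s' => γ s' τ'' i) s)
          = fun τ'' => ∑ i : Fin 3, m (γ s τ'') τ'' i * Cc γ i s τ'' :=
        funext fun τ'' => by simp only [deriv_C hγ]
      show HasDerivAt (fun τ'' => ∑ i : Fin 3,
          m (γ s τ'') τ'' i * deriv (fun s' => γ s' τ'' i) s) (Dc m U γ τ' s) τ'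
      rw [h1, Dc]
      exact HasDerivAt.fun_sum fun i _ =>
        (hasDerivAt_A hm hγ hadv i s τ').fun_mul (hasDerivAt_CB hγ i s τ'))
  have hder : deriv (fun τ => ∫ s in (0:ℝ)..1,
      ∑ i : Fin 3, m (γ s τ) τ i * deriv (fun s' => γ s' τ i) s) t
      = ∫ s in (0:ℝ)..1, Dc m U γ t s := key.2.deriv
  rw [hder]
  rw [intervalIntegral.integral_congr
    (g := fun s => (∑ i : Fin 3, F (γ s t) t i * Cc γ i s t) - Pc ψ γ t s)
    (fun s _ => D_eq hm hU hγ hadv hmom t s)]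
  rw [intervalIntegral.integral_sub
    ((cont_Fterm hF hγ t).intervalIntegrable 0 1)
    ((cont_P hψ hγ t).intervalIntegrable 0 1)]
  have hP0 : (∫ s in (0:ℝ)..1, Pc ψ γ t s) = 0 := by
    rw [intervalIntegral.integral_eq_sub_of_hasDerivAt
      (fun s _ => hasDerivAt_P hψ hγ t s) ((cont_P hψ hγ t).intervalIntegrable 0 1)]
    have h01 : γ (1:ℝ) t = γ 0 t := by
      have := hper 0 t; rwa [zero_add] at this
    rw [h01, sub_self]
  rw [hP0, sub_zero]
  refine intervalIntegral.integral_congr fun s _ => ?_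
  simp only [deriv_C hγ]
end
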